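/- Let P be a finite Frobenius poset and let F = F_S ∈ (g_A(P))* (for some S ⊆ Rel(P)) be a small Frobenius functional such that U_F(P) is a filter of P, D_F(P) is an order ideal of P, and B_F(P) = ∅. Then the principal element F̂ = Σ_{p∈P} c_{p,p} E_{p,p} is diagonal, with c_{p,p} = |U_F(P)|/|P| for every p ∈ D_F(P) and c_{p,p} = −|D_F(P)|/|P| for every p ∈ U_F(P). -/

import Mathlib

/-!
Common definitions: for a finite poset `P`, identified with `{1,…,n}` via a linear
extension, represented by a relation `le` on `Fin n`, the type-A Lie poset algebra
`gA le` is the Lie subalgebra of `sl(n, ℂ)` spanned by the matrix units `E p q`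
for `p ≺ q` together with all trace-zero diagonal matrices (here realized as a
submodule of complex `n × n` matrices, which is closed under the commutator
bracket).  `gFull le` is the full Lie poset algebra `g(P)` (with all diagonal
matrices).  `FS S` is the functional `F_S = ∑_{(p,q) ∈ S} E*_{p,q}`.
-/

namespace LiePosets

noncomputable section

open scoped BigOperators

/-- Complex `n × n` matrices. -/
abbrev M (n : ℕ) : Type := Matrix (Fin n) (Fin n) ℂ

/-- The strict relation `p ≺ q` attached to a poset relation `le`. -/
def Strict {n : ℕ} (le : Fin n → Fin n → Prop) (p q : Fin n) : Prop := le p q ∧ p ≠ q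

/-- The type-A Lie poset algebra `g_A(P)`: trace-zero matrices supported on
relations of the poset (off-diagonal entries vanish off the strict relations). -/
def gA {n : ℕ} (le : Fin n → Fin n → Prop) : Submodule ℂ (M n) where
  carrier := {A | Matrix.trace A = 0 ∧ ∀ p q : Fin n, p ≠ q → ¬ le p q → A p q = 0}
  add_mem' := by
    rintro A B ⟨hA, hA'⟩ ⟨hB, hB'⟩
    exact ⟨by simp [hA, hB], fun p q h1 h2 => by
      simp [Matrix.add_apply, hA' p q h1 h2, hB' p q h1 h2]⟩
  zero_mem' := ⟨by simp, fun p q _ _ => by simp⟩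
  smul_mem' := by
    rintro c A ⟨hA, hA'⟩
    exact ⟨by simp [hA], fun p q h1 h2 => by
      simp [Matrix.smul_apply, hA' p q h1 h2]⟩

/-- The Lie poset algebra `g(P)` (all diagonal matrices allowed). -/
def gFull {n : ℕ} (le : Fin n → Fin n → Prop) : Submodule ℂ (M n) where
  carrier := {A | ∀ p q : Fin n, p ≠ q → ¬ le p q → A p q = 0}
  add_mem' := by
    rintro A B hA hB p q h1 h2
    simp [Matrix.add_apply, hA p q h1 h2, hB p q h1 h2]
  zero_mem' := fun p q _ _ => by simp
  smul_mem' := by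
    rintro c A hA p q h1 h2
    simp [Matrix.smul_apply, hA p q h1 h2]

/-- The functional `F_S = ∑_{(p,q) ∈ S} E*_{p,q}` reading off the sum of the
coefficients of the matrix entries indexed by `S`. -/
def FS {n : ℕ} (S : Finset (Fin n × Fin n)) : M n →ₗ[ℂ] ℂ where
  toFun A := ∑ pq ∈ S, A pq.1 pq.2
  map_add' A B := by simp [Matrix.add_apply, Finset.sum_add_distrib]
  map_smul' c A := by simp [Matrix.smul_apply, Finset.mul_sum]

/-- `F` is a Frobenius functional on the Lie subalgebra (submodule) `g`:
the kernel of the Kirillov form `B_F(x, y) = F ⁅x, y⁆` on `g` is trivial. -/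
def IsFrobeniusOn {n : ℕ} (g : Submodule ℂ (M n)) (F : M n →ₗ[ℂ] ℂ) : Prop :=
  ∀ x ∈ g, (∀ y ∈ g, F ⁅x, y⁆ = 0) → x = 0

/-- `H` is a principal element for `F` on `g`:  `B_F(H, ·) = F` on `g`. -/
def IsPrincipal {n : ℕ} (g : Submodule ℂ (M n)) (F : M n →ₗ[ℂ] ℂ) (H : M n) : Prop :=
  H ∈ g ∧ ∀ y ∈ g, F ⁅H, y⁆ = F y

/-- The adjoint action `ad H = ⁅H, -⁆` as a linear endomorphism of matrices. -/
def adE {n : ℕ} (H : M n) : Module.End ℂ (M n) :=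
  LinearMap.mulLeft ℂ H - LinearMap.mulRight ℂ H

/-- Multiplicity of `μ` as an eigenvalue of `ad H` acting on `g`. -/
def eigMult {n : ℕ} (g : Submodule ℂ (M n)) (H : M n) (μ : ℂ) : ℕ :=
  Module.finrank ℂ ↥(g ⊓ Module.End.eigenspace (adE H) μ)

/-- `g` has a binary spectrum: for any Frobenius functional `F` and corresponding
principal element `H`, the multiset of eigenvalues of `ad H` on `g` consists of an
equal number of `0`'s and `1`'s. -/
def HasBinarySpectrum {n : ℕ} (g : Submodule ℂ (M n)) : Prop :=
  ∀ (F : M n →ₗ[ℂ] ℂ) (H : M n), IsFrobeniusOn g F → IsPrincipal g F H →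
    eigMult g H 0 = eigMult g H 1 ∧
    eigMult g H 0 + eigMult g H 1 = Module.finrank ℂ ↥g

/-- The kernel of the Kirillov form `B_F` on `g`. -/
def kirKer {n : ℕ} (g : Submodule ℂ (M n)) (F : M n →ₗ[ℂ] ℂ) : Submodule ℂ (M n) where
  carrier := {x | x ∈ g ∧ ∀ y ∈ g, F ⁅x, y⁆ = 0}
  zero_mem' := ⟨g.zero_mem, fun y _ => by simp only [Ring.lie_def]; simp⟩
  add_mem' := by
    rintro a b ⟨ha, ha'⟩ ⟨hb, hb'⟩
    exact ⟨g.add_mem ha hb, fun y hy => by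
      have h1 := ha' y hy; have h2 := hb' y hy
      simp only [Ring.lie_def] at h1 h2 ⊢
      rw [add_mul, mul_add, map_sub, map_add, map_add]
      rw [map_sub] at h1 h2
      linear_combination h1 + h2⟩
  smul_mem' := by
    rintro c a ⟨ha, ha'⟩
    exact ⟨g.smul_mem c ha, fun y hy => by
      have h1 := ha' y hy
      simp only [Ring.lie_def] at h1 ⊢
      rw [smul_mul_assoc, mul_smul_comm, ← smul_sub, map_smul, h1, smul_zero]⟩

/-- The index of the Lie algebra `g`: the minimum over all functionals of the
dimension of the kernel of the corresponding Kirillov form. -/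
def lieIndex {n : ℕ} (g : Submodule ℂ (M n)) : ℕ :=
  sInf {d : ℕ | ∃ F : M n →ₗ[ℂ] ℂ, d = Module.finrank ℂ ↥(kirKer g F)}

/-- The underlying undirected graph of the directed graph `Γ_{F_S}`. -/
def gammaGraph {n : ℕ} (S : Finset (Fin n × Fin n)) : SimpleGraph (Fin n) where
  Adj p q := p ≠ q ∧ ((p, q) ∈ S ∨ (q, p) ∈ S)
  symm := ⟨fun p q h => ⟨h.1.symm, h.2.symm⟩⟩
  loopless := ⟨fun p h => h.1 rfl⟩

/-- `F_S` is small: `S` consists of strict relations of the poset and `Γ_{F_S}`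
is a spanning tree of the comparability graph. -/
def Small {n : ℕ} (le : Fin n → Fin n → Prop) (S : Finset (Fin n × Fin n)) : Prop :=
  (∀ pq ∈ S, Strict le pq.1 pq.2) ∧ (gammaGraph S).IsTree

/-- `U_{F_S}(P)`: the sinks of `Γ_{F_S}`. -/
def sinks {n : ℕ} (S : Finset (Fin n × Fin n)) : Set (Fin n) :=
  {p | (∃ q, (q, p) ∈ S) ∧ ∀ q, (p, q) ∉ S}

/-- `D_{F_S}(P)`: the sources of `Γ_{F_S}`. -/
def sources {n : ℕ} (S : Finset (Fin n × Fin n)) : Set (Fin n) :=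
  {p | (∃ q, (p, q) ∈ S) ∧ ∀ q, (q, p) ∉ S}

/-- `B_{F_S}(P)`: the vertices of `Γ_{F_S}` that are neither sinks nor sources. -/
def betweens {n : ℕ} (S : Finset (Fin n × Fin n)) : Set (Fin n) :=
  {p | (∃ q, (p, q) ∈ S) ∧ ∃ q, (q, p) ∈ S}

/-- `U` is a filter (up-closed set) of the poset. -/
def IsPosetFilter {n : ℕ} (le : Fin n → Fin n → Prop) (U : Set (Fin n)) : Prop :=
  ∀ p ∈ U, ∀ q, le p q → q ∈ U

/-- `D` is an order ideal (down-closed set) of the poset. -/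
def IsPosetIdeal {n : ℕ} (le : Fin n → Fin n → Prop) (D : Set (Fin n)) : Prop :=
  ∀ p ∈ D, ∀ q, le q p → q ∈ D

/-- Helper to build elements of `Fin n` from natural numbers. -/
def fmk (n : ℕ) (h : 0 < n) (i : ℕ) : Fin n := ⟨i % n, Nat.mod_lt _ h⟩

/-- Restriction of a matrix along an embedding of index types. -/
def restrictMat {N K : ℕ} (f : Fin K → Fin N) (B : M N) : M K :=
  Matrix.of fun p q => B (f p) (f q)

/-! With `B_F(P) = ∅` every edge of `Γ_F` runs from a source to a sink, and since `Γ_F` is a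
connected spanning graph, the sources `D` and the sinks `U` partition `P`. The diagonal matrix
with entries `|U|/|P|` on `D` and `-|D|/|P|` on `U` has trace zero, and its bracket with any `y`
multiplies the `(p, q)` entry of `y` by `d p - d q = 1` for every edge `p → q`; so it satisfies
`B_F(F̂, ·) = F`, and it is the principal element because `F` is Frobenius. -/

section Diagonal

variable {ι : Type*}

lemma lie_diagonal_apply [Fintype ι] [DecidableEq ι] {R : Type*} [CommRing R] (d : ι → R)
    (y : Matrix ι ι R) (i j : ι) : ⁅Matrix.diagonal d, y⁆ i j = (d i - d j) * y i j := by
  rw [Ring.lie_def, Matrix.sub_apply, Matrix.diagonal_mul, Matrix.mul_diagonal]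
  ring

open Classical in
def bipartiteDiag (D : Set ι) (i : ι) : ℂ :=
  if i ∈ D then (Dᶜ.ncard : ℂ) / Nat.card ι else -((D.ncard : ℂ) / Nat.card ι)

lemma sum_bipartiteDiag [Fintype ι] (D : Set ι) : ∑ i, bipartiteDiag D i = 0 := by
  classical
  simp only [bipartiteDiag, Finset.sum_ite, Finset.sum_const, nsmul_eq_mul, ← Set.toFinset_ofPred,
    ← Set.ncard_eq_toFinset_card']
  change (D.ncard : ℂ) * _ + (Dᶜ.ncard : ℂ) * _ = 0
  ring

lemma bipartiteDiag_sub_bipartiteDiag [Finite ι] {D : Set ι} {i j : ι} (hi : i ∈ D)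
    (hj : j ∉ D) : bipartiteDiag D i - bipartiteDiag D j = 1 := by
  have : Nonempty ι := ⟨i⟩
  have hcard : (Nat.card ι : ℂ) ≠ 0 := Nat.cast_ne_zero.2 Nat.card_pos.ne'
  rw [bipartiteDiag, if_pos hi, bipartiteDiag, if_neg hj, sub_neg_eq_add, ← add_div,
    div_eq_one_iff_eq hcard, add_comm]
  exact_mod_cast Set.ncard_add_ncard_compl D

end Diagonal

section PrincipalElement

variable {n : ℕ}

lemma diagonal_mem_gA (le : Fin n → Fin n → Prop) {d : Fin n → ℂ} (hd : ∑ i, d i = 0) :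
    Matrix.diagonal d ∈ gA le :=
  ⟨by rwa [Matrix.trace_diagonal], fun _ _ hpq _ => Matrix.diagonal_apply_ne d hpq⟩

lemma FS_lie_diagonal {S : Finset (Fin n × Fin n)} {d : Fin n → ℂ}
    (hd : ∀ pq ∈ S, d pq.1 - d pq.2 = 1) (y : M n) : FS S ⁅Matrix.diagonal d, y⁆ = FS S y :=
  Finset.sum_congr rfl fun pq hpq => by rw [lie_diagonal_apply, hd pq hpq, one_mul]

lemma isPrincipal_diagonal {le : Fin n → Fin n → Prop} {S : Finset (Fin n × Fin n)}
    {d : Fin n → ℂ} (hsum : ∑ i, d i = 0) (hd : ∀ pq ∈ S, d pq.1 - d pq.2 = 1) :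
    IsPrincipal (gA le) (FS S) (Matrix.diagonal d) :=
  ⟨diagonal_mem_gA le hsum, fun y _ => FS_lie_diagonal hd y⟩

lemma IsFrobeniusOn.eq_of_isPrincipal {g : Submodule ℂ (M n)} {F : M n →ₗ[ℂ] ℂ} {H H' : M n}
    (hF : IsFrobeniusOn g F) (hH : IsPrincipal g F H) (hH' : IsPrincipal g F H') : H = H' :=
  sub_eq_zero.1 <| hF _ (g.sub_mem hH.1 hH'.1) fun y hy => by
    have h := hH.2 y hy
    have h' := hH'.2 y hy
    simp only [Ring.lie_def, sub_mul, mul_sub, map_sub] at h h' ⊢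
    linear_combination h - h'

end PrincipalElement

section SourcesAndSinks

variable {n : ℕ} {S : Finset (Fin n × Fin n)} {p q : Fin n}

lemma mem_sources_of_mem (hB : betweens S = ∅) (h : (p, q) ∈ S) : p ∈ sources S :=
  ⟨⟨q, h⟩, fun r hr => Set.eq_empty_iff_forall_notMem.1 hB p ⟨⟨q, h⟩, r, hr⟩⟩

lemma mem_sinks_of_mem (hB : betweens S = ∅) (h : (p, q) ∈ S) : q ∈ sinks S :=
  ⟨⟨p, h⟩, fun r hr => Set.eq_empty_iff_forall_notMem.1 hB q ⟨⟨r, hr⟩, p, h⟩⟩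

lemma notMem_sources_of_mem_sinks (hp : p ∈ sinks S) : p ∉ sources S :=
  fun hs => hs.2 _ hp.1.choose_spec

lemma nontrivial_of_mem_sources (hp : p ∈ sources S) : Nontrivial (Fin n) := by
  obtain ⟨⟨q, hpq⟩, hno⟩ := hp
  refine ⟨⟨p, q, fun h => hno p ?_⟩⟩
  rwa [← h] at hpq

lemma compl_sources_eq_sinks [Nontrivial (Fin n)] (hB : betweens S = ∅)
    (hconn : (gammaGraph S).Preconnected) : (sources S)ᶜ = sinks S := by
  ext p
  refine ⟨fun hp => ?_, notMem_sources_of_mem_sinks⟩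
  obtain ⟨q, -, hpq | hqp⟩ := hconn.exists_adj_of_nontrivial p
  · exact absurd (mem_sources_of_mem hB hpq) hp
  · exact mem_sinks_of_mem hB hqp

end SourcesAndSinks

theorem principal_element_of_small_frobenius_functional_general
    (n : ℕ) (le : Fin n → Fin n → Prop)
    (S : Finset (Fin n × Fin n))
    (hsmall : Small le S)
    (hFrob : IsFrobeniusOn (gA le) (FS S))
    (hB : betweens S = ∅) :
    ∀ H : M n, IsPrincipal (gA le) (FS S) H →
      (∀ p q, p ≠ q → H p q = 0) ∧
      (∀ p ∈ sources S, H p p = ((sinks S).ncard : ℂ) / (n : ℂ)) ∧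
      (∀ p ∈ sinks S, H p p = -(((sources S).ncard : ℂ) / (n : ℂ))) := by
  intro H hH
  have hprincipal : IsPrincipal (gA le) (FS S) (Matrix.diagonal (bipartiteDiag (sources S))) :=
    isPrincipal_diagonal (sum_bipartiteDiag _) fun _ hpq =>
      bipartiteDiag_sub_bipartiteDiag (mem_sources_of_mem hB hpq)
        (notMem_sources_of_mem_sinks (mem_sinks_of_mem hB hpq))
  obtain rfl := hFrob.eq_of_isPrincipal hH hprincipal
  refine ⟨fun p q hpq => Matrix.diagonal_apply_ne _ hpq, fun p hp => ?_, fun p hp => ?_⟩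
  · have := nontrivial_of_mem_sources hp
    rw [Matrix.diagonal_apply_eq, bipartiteDiag, if_pos hp,
      compl_sources_eq_sinks hB hsmall.2.connected.preconnected, Nat.card_fin]
  · rw [Matrix.diagonal_apply_eq, bipartiteDiag, if_neg (notMem_sources_of_mem_sinks hp),
      Nat.card_fin]

/-- for a finite Frobenius poset `P` and a small Frobenius functional
`F = F_S` with `U_F(P)` a filter, `D_F(P)` an order ideal and `B_F(P) = ∅`, the
principal element `F̂` is diagonal, with diagonal entry `|U_F(P)|/|P|` on
`D_F(P)` and `-|D_F(P)|/|P|` on `U_F(P)`. -/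
theorem principal_element_of_small_frobenius_functional
    (n : ℕ) (le : Fin n → Fin n → Prop)
    (hrefl : ∀ p, le p p)
    (hantisymm : ∀ p q, le p q → le q p → p = q)
    (htrans : ∀ p q r, le p q → le q r → le p r)
    (hlin : ∀ p q, le p q → p ≤ q)
    (hFrobPoset : ∃ G : M n →ₗ[ℂ] ℂ, IsFrobeniusOn (gA le) G)
    (S : Finset (Fin n × Fin n))
    (hsmall : Small le S)
    (hFrob : IsFrobeniusOn (gA le) (FS S))
    (hU : IsPosetFilter le (sinks S))
    (hD : IsPosetIdeal le (sources S))
    (hB : betweens S = ∅) :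
    ∀ H : M n, IsPrincipal (gA le) (FS S) H →
      (∀ p q, p ≠ q → H p q = 0) ∧
      (∀ p ∈ sources S, H p p = ((sinks S).ncard : ℂ) / (n : ℂ)) ∧
      (∀ p ∈ sinks S, H p p = -(((sources S).ncard : ℂ) / (n : ℂ))) :=
  principal_element_of_small_frobenius_functional_general n le S hsmall hFrob hB

end
end LiePosets
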